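/- arXiv:1403.4059 — 2 statements merged into one kernel-verified Lean document; each statement's English description precedes it below -/
import Mathlib

section
/- Let D ⊆ ℂ² be a quasi-circular domain with weight (m₁,m₂), i.e. a bounded domain containing the origin invariant under (z₁,z₂) ↦ (e^{i m₁ θ} z₁, e^{i m₂ θ} z₂) for all θ ∈ ℝ, where m₁, m₂ are positive integers, and let K : D × D → ℂ be the Bergman kernel of D. Then z ↦ K(z,0) is constant on D and K(z,0) = K(0,0) ≠ 0 for all z ∈ D. -/
open MeasureTheory

/-- The complex Jacobian matrix of a map `φ : ℂⁿ → ℂⁿ` at a point `p`. -/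
noncomputable def jacMatrix {n : ℕ} (φ : (Fin n → ℂ) → (Fin n → ℂ)) (p : Fin n → ℂ) :
    Matrix (Fin n) (Fin n) ℂ :=
  Matrix.of fun i j => fderiv ℂ (fun z => φ z i) p (Pi.single j 1)

/-- `f` is a biholomorphism from `D` onto `D'`. -/
def IsBiholomorphicMap {n : ℕ} (D D' : Set (Fin n → ℂ))
    (f : (Fin n → ℂ) → (Fin n → ℂ)) : Prop :=
  DifferentiableOn ℂ f D ∧ Set.BijOn f D D' ∧
    ∃ g, DifferentiableOn ℂ g D' ∧ (∀ z ∈ D, g (f z) = z) ∧ (∀ w ∈ D', f (g w) = w)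

/-- `K` is the Bergman kernel of the bounded domain `D ⊆ ℂⁿ`. -/
def IsBergmanKernel {n : ℕ} (D : Set (Fin n → ℂ))
    (K : (Fin n → ℂ) → (Fin n → ℂ) → ℂ) : Prop :=
  (∀ w ∈ D, DifferentiableOn ℂ (fun z => K z w) D ∧
      IntegrableOn (fun z => ‖K z w‖ ^ 2) D) ∧
  (∀ z ∈ D, ∀ w ∈ D, K z w = starRingEnd ℂ (K w z)) ∧
  (∀ f : (Fin n → ℂ) → ℂ, DifferentiableOn ℂ f D →
      IntegrableOn (fun z => ‖f z‖ ^ 2) D →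
      ∀ z ∈ D, f z = ∫ w in D, f w * K z w)

/-- Holomorphic derivative `∂_{z_j} K(z,w)` of the Bergman kernel in its first variable. -/
noncomputable def Dz {n : ℕ} (K : (Fin n → ℂ) → (Fin n → ℂ) → ℂ) (j : Fin n)
    (z w : Fin n → ℂ) : ℂ :=
  fderiv ℂ (fun z' => K z' w) z (Pi.single j 1)

/-- Anti-holomorphic (Wirtinger) derivative `∂_{w̄ᵢ} K(z,w)` of the Bergman kernel in its
second variable. -/
noncomputable def Dwbar {n : ℕ} (K : (Fin n → ℂ) → (Fin n → ℂ) → ℂ) (i : Fin n)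
    (z w : Fin n → ℂ) : ℂ :=
  starRingEnd ℂ (fderiv ℂ (fun w' => starRingEnd ℂ (K z w')) w (Pi.single i 1))

/-- The matrix `T_D(z,w)` with entries `∂²/∂w̄ᵢ∂z_j log K(z,w)
  = [K ∂_{w̄ᵢ}∂_{z_j}K − ∂_{z_j}K ∂_{w̄ᵢ}K]/K²`. -/
noncomputable def bergmanT {n : ℕ} (K : (Fin n → ℂ) → (Fin n → ℂ) → ℂ)
    (z w : Fin n → ℂ) : Matrix (Fin n) (Fin n) ℂ :=
  Matrix.of fun i j =>
    (K z w * Dwbar (fun z' w' => Dz K j z' w') i z w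
      - Dz K j z w * Dwbar K i z w) / (K z w) ^ 2

/-- `D ⊆ ℂ²` is a bounded domain containing the origin, invariant under
`(z₁,z₂) ↦ (e^{i m₁ θ} z₁, e^{i m₂ θ} z₂)` with positive integer weight `(m₁, m₂)`. -/
def IsQuasiCircular (D : Set (Fin 2 → ℂ)) (m₁ m₂ : ℕ) : Prop :=
  IsOpen D ∧ IsConnected D ∧ Bornology.IsBounded D ∧ (0 : Fin 2 → ℂ) ∈ D ∧
  0 < m₁ ∧ 0 < m₂ ∧
  ∀ θ : ℝ, ∀ z ∈ D,
    (![Complex.exp ((((m₁ : ℝ) * θ : ℝ) : ℂ) * Complex.I) * z 0,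
       Complex.exp ((((m₂ : ℝ) * θ : ℝ) : ℂ) * Complex.I) * z 1] : Fin 2 → ℂ) ∈ D

/-- A normal quasi-circular domain: weight normalized so `m₁ ≤ m₂`, `gcd(m₁,m₂)=1`, `m₁ ≥ 2`. -/
def IsNormalQuasiCircular (D : Set (Fin 2 → ℂ)) : Prop :=
  ∃ m₁ m₂ : ℕ, 2 ≤ m₁ ∧ m₁ ≤ m₂ ∧ Nat.gcd m₁ m₂ = 1 ∧ IsQuasiCircular D m₁ m₂

/-!
The maps `z ↦ (t ^ m₁ * z₁, t ^ m₂ * z₂)` with `‖t‖ = 1` are volume-preserving linear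
automorphisms of `D` fixing `0`, and the Bergman kernel is invariant under such automorphisms,
so `h := K(·, 0)` is constant on their orbits. For `z` near `0`, the holomorphic disc
`t ↦ h (t ^ m₁ * z₁, t ^ m₂ * z₂)`, `‖t‖ ≤ 1`, is then constant on the unit circle, so by the
maximum principle its value `h 0` at the centre equals `h z`. The identity principle spreads
`h ≡ h 0` over the connected set `D`, and then the reproducing property applied to `f ≡ 1` reads
`vol(D) * conj (K 0 0) = 1`.
-/

open Metric Set Filter Topology

section IdentityPrinciple

variable {E F : Type*} [NormedAddCommGroup E] [NormedSpace ℂ E]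
  [NormedAddCommGroup F] [NormedSpace ℂ F] [CompleteSpace F] {f g : E → F}

theorem DifferentiableOn.eqOn_of_convex_of_eventuallyEq {C : Set E}
    (hf : DifferentiableOn ℂ f C) (hg : DifferentiableOn ℂ g C) (hCo : IsOpen C)
    (hC : Convex ℝ C) {y : E} (hy : y ∈ C) (hfg : f =ᶠ[𝓝 y] g) : EqOn f g C := by
  intro u hu
  -- analyticity of holomorphic maps is only available in one variable: restrict to a complex line
  set L : ℂ → E := fun t => y + t • (u - y)
  have hL : Differentiable ℂ L := by fun_prop
  have hLo : IsOpen (L ⁻¹' C) := hCo.preimage hL.continuous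
  have hLc : Convex ℝ (L ⁻¹' C) := by
    intro a ha b hb s t hs ht hst
    have hsplit : L (s • a + t • b) = s • L a + t • L b := by
      simp only [L, smul_add, add_smul, smul_assoc]
      rw [add_add_add_comm, ← add_smul, hst, one_smul]
    rw [mem_preimage, hsplit]
    exact hC ha hb hs ht hst
  have hL0 : L 0 = y := by simp [L]
  have hfgL : f ∘ L =ᶠ[𝓝 0] g ∘ L :=
    (hL.continuous.tendsto' 0 y hL0).eventually (p := fun v => f v = g v) hfg
  have hL1 : (1 : ℂ) ∈ L ⁻¹' C := by simpa [L] using hu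
  have hfL := (hf.comp hL.differentiableOn (mapsTo_preimage L C)).analyticOnNhd hLo
  have hgL := (hg.comp hL.differentiableOn (mapsTo_preimage L C)).analyticOnNhd hLo
  simpa [L] using hfL.eqOn_of_preconnected_of_eventuallyEq hgL hLc.isPreconnected
    (by simpa [hL0] using hy) hfgL hL1

theorem DifferentiableOn.eqOn_of_isPreconnected_of_eventuallyEq {U : Set E}
    (hf : DifferentiableOn ℂ f U) (hg : DifferentiableOn ℂ g U) (hUo : IsOpen U)
    (hU : IsPreconnected U) {z₀ : E} (h₀ : z₀ ∈ U) (hfg : f =ᶠ[𝓝 z₀] g) : EqOn f g U := by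
  suffices hsub : U ⊆ {x | f =ᶠ[𝓝 x] g} from fun x hx => (hsub hx).self_of_nhds
  refine hU.subset_of_closure_inter_subset isOpen_setOfPred_eventually_nhds ⟨z₀, h₀, hfg⟩ ?_
  rintro x ⟨hxS, hxU⟩
  obtain ⟨r, hr, hball⟩ := Metric.isOpen_iff.mp hUo x hxU
  obtain ⟨y, hyS, hy⟩ := Metric.mem_closure_iff.mp hxS r hr
  have hEq : EqOn f g (ball x r) :=
    (hf.mono hball).eqOn_of_convex_of_eventuallyEq (hg.mono hball) isOpen_ball (convex_ball x r)
      (mem_ball'.mpr hy) hyS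
  exact Filter.eventually_of_mem (ball_mem_nhds x hr) hEq

end IdentityPrinciple

section WeightedAction

variable {n : ℕ} (m : Fin n → ℕ)

def weightedSmul (t : ℂ) (z : Fin n → ℂ) : Fin n → ℂ := fun i => t ^ m i * z i

@[simp]
theorem weightedSmul_apply (t : ℂ) (z : Fin n → ℂ) (i : Fin n) :
    weightedSmul m t z i = t ^ m i * z i := rfl

theorem weightedSmul_zero_left {m : Fin n → ℕ} (hm : ∀ i, m i ≠ 0) (z : Fin n → ℂ) :
    weightedSmul m 0 z = 0 := by
  ext i; simp [hm i]

@[simp]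
theorem weightedSmul_zero_right (t : ℂ) : weightedSmul m t 0 = 0 := by
  ext i; simp

theorem weightedSmul_weightedSmul (s t : ℂ) (z : Fin n → ℂ) :
    weightedSmul m s (weightedSmul m t z) = weightedSmul m (s * t) z := by
  ext i; simp [mul_pow, mul_assoc]

@[simp]
theorem weightedSmul_one (z : Fin n → ℂ) : weightedSmul m 1 z = z := by
  ext i; simp

theorem differentiable_weightedSmul (t : ℂ) : Differentiable ℂ (weightedSmul m t) := by
  unfold weightedSmul; fun_prop

theorem differentiable_weightedSmul_left (z : Fin n → ℂ) :
    Differentiable ℂ fun t => weightedSmul m t z := by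
  unfold weightedSmul; fun_prop

theorem norm_weightedSmul_le {t : ℂ} (ht : ‖t‖ ≤ 1) (z : Fin n → ℂ) :
    ‖weightedSmul m t z‖ ≤ ‖z‖ := by
  refine pi_norm_le_iff_of_nonneg (norm_nonneg z) |>.mpr fun i => ?_
  rw [weightedSmul_apply, norm_mul, norm_pow]
  exact (mul_le_of_le_one_left (norm_nonneg _) (pow_le_one₀ (norm_nonneg t) ht)).trans
    (norm_le_pi_norm z i)

theorem measurePreserving_weightedSmul {t : ℂ} (ht : ‖t‖ = 1) :
    MeasurePreserving (weightedSmul m t) := by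
  refine volume_preserving_pi fun i => ?_
  have hmem : t ^ m i ∈ Submonoid.unitSphere ℂ := by
    simp [Submonoid.unitSphere, ht]
  have hrot : ⇑(rotation ⟨t ^ m i, hmem⟩) = (t ^ m i * ·) := funext fun x => rotation_apply _ x
  simpa only [hrot] using (rotation ⟨t ^ m i, hmem⟩).measurePreserving

theorem measurableEmbedding_weightedSmul {t : ℂ} (ht : t ≠ 0) :
    MeasurableEmbedding (weightedSmul m t) :=
  (MeasurableEquiv.piCongrRight fun i =>
    (Homeomorph.mulLeft₀ (t ^ m i) (pow_ne_zero _ ht)).toMeasurableEquiv).measurableEmbedding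

theorem isBiholomorphicMap_weightedSmul {D : Set (Fin n → ℂ)}
    (hD : ∀ s : ℂ, ‖s‖ = 1 → MapsTo (weightedSmul m s) D D) {t : ℂ} (ht : ‖t‖ = 1) :
    IsBiholomorphicMap D D (weightedSmul m t) := by
  have ht₀ : t ≠ 0 := norm_ne_zero_iff.mp (ht ▸ one_ne_zero)
  have ht' : ‖t⁻¹‖ = 1 := by rw [norm_inv, ht, inv_one]
  have hleft : ∀ z, weightedSmul m t⁻¹ (weightedSmul m t z) = z := fun z => by
    rw [weightedSmul_weightedSmul, inv_mul_cancel₀ ht₀, weightedSmul_one]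
  have hright : ∀ z, weightedSmul m t (weightedSmul m t⁻¹ z) = z := fun z => by
    rw [weightedSmul_weightedSmul, mul_inv_cancel₀ ht₀, weightedSmul_one]
  refine ⟨(differentiable_weightedSmul m t).differentiableOn,
    ⟨hD t ht, fun z _ w _ hzw => by simpa [hleft] using congrArg (weightedSmul m t⁻¹) hzw,
      fun w hw => ⟨_, hD _ ht' hw, hright w⟩⟩,
    weightedSmul m t⁻¹, (differentiable_weightedSmul m _).differentiableOn,
    fun z _ => hleft z, fun w _ => hright w⟩

variable {m} {F : Type*} [NormedAddCommGroup F] [NormedSpace ℂ F]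
  {f : (Fin n → ℂ) → F}

theorem apply_zero_eq_of_weightedSmul_invariant (hm : ∀ i, m i ≠ 0) {U : Set (Fin n → ℂ)}
    (hf : DifferentiableOn ℂ f U) {z : Fin n → ℂ}
    (hU : ∀ t : ℂ, ‖t‖ ≤ 1 → weightedSmul m t z ∈ U)
    (hinv : ∀ t : ℂ, ‖t‖ = 1 → f (weightedSmul m t z) = f z) : f 0 = f z := by
  set φ : ℂ → F := fun t => f (weightedSmul m t z)
  have hφ : DiffContOnCl ℂ φ (ball 0 1) := by
    refine DifferentiableOn.diffContOnCl ?_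
    rw [closure_ball 0 one_ne_zero]
    exact hf.comp (differentiable_weightedSmul_left m z).differentiableOn
      fun t ht => hU t (mem_closedBall_zero_iff.mp ht)
  have hbdry : EqOn φ (fun _ => f z) (frontier (ball 0 1)) := by
    rw [frontier_ball 0 one_ne_zero]
    exact fun t ht => hinv t (mem_sphere_zero_iff_norm.mp ht)
  simpa [φ, weightedSmul_zero_left hm] using
    Complex.eqOn_of_eqOn_frontier isBounded_ball hφ diffContOnCl_const hbdry
      (mem_ball_self one_pos)

theorem eqOn_apply_zero_of_weightedSmul_invariant [CompleteSpace F] (hm : ∀ i, m i ≠ 0)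
    {D : Set (Fin n → ℂ)} (hDo : IsOpen D) (hD : IsPreconnected D) (hD₀ : 0 ∈ D)
    (hf : DifferentiableOn ℂ f D)
    (hinv : ∀ t : ℂ, ‖t‖ = 1 → ∀ z ∈ D, f (weightedSmul m t z) = f z) :
    EqOn f (fun _ => f 0) D := by
  obtain ⟨ε, hε, hball⟩ := Metric.isOpen_iff.mp hDo 0 hD₀
  have hnear : f =ᶠ[𝓝 0] fun _ => f 0 := by
    filter_upwards [ball_mem_nhds 0 hε] with z hz
    have hcurve : ∀ t : ℂ, ‖t‖ ≤ 1 → weightedSmul m t z ∈ ball 0 ε := fun t ht => by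
      rw [mem_ball_zero_iff] at hz ⊢
      exact (norm_weightedSmul_le m ht z).trans_lt hz
    exact (apply_zero_eq_of_weightedSmul_invariant hm (hf.mono hball) hcurve
      fun t ht => hinv t ht z (hball hz)).symm
  exact hf.eqOn_of_isPreconnected_of_eventuallyEq (differentiableOn_const _) hDo hD hD₀ hnear

end WeightedAction

namespace IsBergmanKernel

variable {n : ℕ} {D : Set (Fin n → ℂ)} {K : (Fin n → ℂ) → (Fin n → ℂ) → ℂ}

theorem unique (hD : MeasurableSet D) {K' : (Fin n → ℂ) → (Fin n → ℂ) → ℂ}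
    (hK : IsBergmanKernel D K) (hK' : IsBergmanKernel D K') {z w : Fin n → ℂ}
    (hz : z ∈ D) (hw : w ∈ D) : K z w = K' z w := by
  obtain ⟨hK₁, hK₂, hK₃⟩ := hK
  obtain ⟨hK'₁, hK'₂, hK'₃⟩ := hK'
  calc K z w = ∫ u in D, K u w * K' z u := hK'₃ _ (hK₁ w hw).1 (hK₁ w hw).2 z hz
    _ = ∫ u in D, starRingEnd ℂ (K' u z * K w u) := by
        refine setIntegral_congr_fun hD fun u hu => ?_
        rw [map_mul, ← hK'₂ z hz u hu, ← hK₂ u hu w hw, mul_comm]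
    _ = starRingEnd ℂ (K' w z) := by
        rw [integral_conj, ← hK₃ _ (hK'₁ z hz).1 (hK'₁ z hz).2 w hw]
    _ = K' z w := (hK'₂ z hz w hw).symm

theorem comp_of_isBiholomorphicMap (hD : MeasurableSet D) (hK : IsBergmanKernel D K)
    {φ : (Fin n → ℂ) → (Fin n → ℂ)}
    (hφ : IsBiholomorphicMap D D φ) (hφm : MeasurePreserving φ) (hφe : MeasurableEmbedding φ) :
    IsBergmanKernel D fun z w => K (φ z) (φ w) := by
  obtain ⟨hK₁, hK₂, hK₃⟩ := hK
  obtain ⟨hφd, hφD, ψ, hψd, hψφ, -⟩ := hφ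
  have hψD : MapsTo ψ D D := fun w hw => by
    obtain ⟨z, hz, rfl⟩ := hφD.surjOn hw
    rwa [hψφ z hz]
  have himage : φ '' D = D := hφD.image_eq
  refine ⟨fun w hw => ⟨(hK₁ _ (hφD.mapsTo hw)).1.comp hφd hφD.mapsTo, ?_⟩,
    fun z hz w hw => hK₂ _ (hφD.mapsTo hz) _ (hφD.mapsTo hw), fun f hf hfi z hz => ?_⟩
  · have h := hK₁ _ (hφD.mapsTo hw)
    rw [← himage] at h
    exact (hφm.integrableOn_image hφe).mp h.2
  · have hfψ : IntegrableOn (fun u => ‖f (ψ u)‖ ^ 2) D := by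
      rw [← himage, hφm.integrableOn_image hφe]
      exact hfi.congr_fun (fun w hw => by simp only [Function.comp_apply, hψφ w hw]) hD
    calc f z = f (ψ (φ z)) := by rw [hψφ z hz]
      _ = ∫ u in D, f (ψ u) * K (φ z) u :=
          hK₃ _ (hf.comp hψd hψD) hfψ _ (hφD.mapsTo hz)
      _ = ∫ w in D, f (ψ (φ w)) * K (φ z) (φ w) := by
          conv_lhs => rw [← himage]
          exact hφm.setIntegral_image_emb hφe _ D
      _ = ∫ w in D, f w * K (φ z) (φ w) :=
          setIntegral_congr_fun hD fun w hw => by rw [hψφ w hw]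

theorem apply_map_map (hD : MeasurableSet D) (hK : IsBergmanKernel D K)
    {φ : (Fin n → ℂ) → (Fin n → ℂ)} (hφ : IsBiholomorphicMap D D φ) (hφm : MeasurePreserving φ)
    (hφe : MeasurableEmbedding φ) {z w : Fin n → ℂ} (hz : z ∈ D) (hw : w ∈ D) :
    K (φ z) (φ w) = K z w :=
  (hK.comp_of_isBiholomorphicMap hD hφ hφm hφe).unique hD hK hz hw

theorem setIntegral_eq_one (hK : IsBergmanKernel D K) (hD : volume D < ⊤) {z : Fin n → ℂ}
    (hz : z ∈ D) : ∫ w in D, K z w = 1 := by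
  have h1 : IntegrableOn (fun _ => ‖(1 : ℂ)‖ ^ 2) D := integrableOn_const hD.ne
  simpa using (hK.2.2 (fun _ => 1) (differentiableOn_const 1) h1 z hz).symm

end IsBergmanKernel

theorem IsQuasiCircular.mapsTo_weightedSmul {D : Set (Fin 2 → ℂ)} {m₁ m₂ : ℕ}
    (hD : IsQuasiCircular D m₁ m₂) {t : ℂ} (ht : ‖t‖ = 1) :
    MapsTo (weightedSmul ![m₁, m₂] t) D D := by
  intro z hz
  have hexp : ∀ k : ℕ, t ^ k = Complex.exp ((((k : ℝ) * t.arg : ℝ) : ℂ) * Complex.I) := by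
    intro k
    rw [Complex.ofReal_mul, mul_assoc, Complex.ofReal_natCast, Complex.exp_nat_mul,
      ← one_mul (Complex.exp _), ← Complex.ofReal_one, ← ht, Complex.norm_mul_exp_arg_mul_I]
  convert hD.2.2.2.2.2.2 t.arg z hz using 1
  ext i
  fin_cases i <;> simp [hexp]

/-- For a quasi-circular domain `D ⊆ ℂ²`, the Bergman kernel satisfies
`K(z,0) = K(0,0) ≠ 0` for all `z ∈ D`. -/
theorem quasiCircular_bergmanKernel_at_zero_const
    (D : Set (Fin 2 → ℂ)) (m₁ m₂ : ℕ) (hD : IsQuasiCircular D m₁ m₂)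
    (K : (Fin 2 → ℂ) → (Fin 2 → ℂ) → ℂ) (hK : IsBergmanKernel D K) :
    K 0 0 ≠ 0 ∧ ∀ z ∈ D, K z 0 = K 0 0 := by
  have ⟨hDo, hDc, hDb, hD₀, hm₁, hm₂, _⟩ := hD
  have hm : ∀ i, ![m₁, m₂] i ≠ 0 := by simp [Fin.forall_fin_two, hm₁.ne', hm₂.ne']
  have hinv : ∀ t : ℂ, ‖t‖ = 1 → ∀ z ∈ D, K (weightedSmul ![m₁, m₂] t z) 0 = K z 0 :=
    fun t ht z hz => by
      simpa using hK.apply_map_map hDo.measurableSet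
        (isBiholomorphicMap_weightedSmul _ (fun _ => hD.mapsTo_weightedSmul) ht)
        (measurePreserving_weightedSmul _ ht)
        (measurableEmbedding_weightedSmul _ (norm_ne_zero_iff.mp (ht ▸ one_ne_zero))) hz hD₀
  have hconst : ∀ z ∈ D, K z 0 = K 0 0 :=
    eqOn_apply_zero_of_weightedSmul_invariant hm hDo hDc.isPreconnected hD₀ (hK.1 0 hD₀).1 hinv
  refine ⟨fun h₀ => one_ne_zero (α := ℂ) ?_, hconst⟩
  calc (1 : ℂ) = ∫ w in D, K 0 w := (hK.setIntegral_eq_one hDb.measure_lt_top hD₀).symm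
    _ = 0 := setIntegral_eq_zero_of_forall_eq_zero fun w hw => by
      rw [hK.2.1 0 hD₀ w hw, hconst w hw, h₀, map_zero]
end

section
/- Let 𝔼 = {(z₁ + z₂, z₁·z₂) : z₁, z₂ ∈ ℂ, |z₁| + |z₂| < 1} ⊆ ℂ² (the symmetrized (1/2,2)-ellipsoid) and let ζ ∈ ℂ with |ζ| = 1. Then the map φ(w₁,w₂) = (ζ·w₁, ζ²·(w₁²/4 − w₂)) is a biholomorphic self-map of 𝔼 with φ(0,0) = (0,0), and φ is not the restriction of a ℂ-linear map. -/
/-! Write a point of `𝔼` as `π₂(p², q²)` with `‖p‖² + ‖q‖² < 1`. Since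
`w₁²/4 − w₂ = ((p² − q²)/2)²`, its image under `φ` is `π₂(ζ(p+q)²/2, ζ(p−q)²/2)`, and by the
parallelogram law `‖(p+q)²/2‖ + ‖(p−q)²/2‖ = ‖p‖² + ‖q‖²`, so `φ` maps `𝔼` into itself.
The inverse of `φ` is the map of the same shape for `ζ⁻¹`. On the disc `{(t, 0)}` the second
coordinate of `φ` is `ζ²t²/4`, which is not linear in `t`. -/

/-- The symmetrized `(1/2,2)`-ellipsoid `𝔼 = π₂({|z₁| + |z₂| < 1})` where
`π₂(z₁,z₂) = (z₁ + z₂, z₁·z₂)`. -/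
def symEllipsoid : Set (ℂ × ℂ) :=
  {w | ∃ z₁ z₂ : ℂ, ‖z₁‖ + ‖z₂‖ < 1 ∧ w = (z₁ + z₂, z₁ * z₂)}

/-- Zapałowski's automorphism `φ(w₁,w₂) = (ζ w₁, ζ²(w₁²/4 − w₂))` of the symmetrized
`(1/2,2)`-ellipsoid, for `|ζ| = 1`. -/
noncomputable def zapAuto (ζ : ℂ) : ℂ × ℂ → ℂ × ℂ :=
  fun w => (ζ * w.1, ζ ^ 2 * (w.1 ^ 2 / 4 - w.2))

lemma mk_zero_mem_symEllipsoid {t : ℂ} (ht : ‖t‖ < 1) : ((t, 0) : ℂ × ℂ) ∈ symEllipsoid :=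
  ⟨t, 0, by simpa using ht, by simp⟩

lemma zapAuto_differentiable (ζ : ℂ) : Differentiable ℂ (zapAuto ζ) := by
  unfold zapAuto
  fun_prop

lemma zapAuto_zero (ζ : ℂ) : zapAuto ζ (0, 0) = (0, 0) := by
  simp [zapAuto]

lemma zapAuto_leftInverse {ζ : ℂ} (hζ : ζ ≠ 0) :
    Function.LeftInverse (zapAuto ζ⁻¹) (zapAuto ζ) := by
  rintro ⟨w₁, w₂⟩
  simp only [zapAuto, Prod.mk.injEq]
  constructor <;> field_simp
  ring

lemma zapAuto_rightInverse {ζ : ℂ} (hζ : ζ ≠ 0) :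
    Function.RightInverse (zapAuto ζ⁻¹) (zapAuto ζ) := by
  have h := zapAuto_leftInverse (inv_ne_zero hζ)
  rwa [inv_inv] at h

lemma zapAuto_sq_add_sq (ζ p q : ℂ) :
    zapAuto ζ (p ^ 2 + q ^ 2, p ^ 2 * q ^ 2) =
      (ζ * (p + q) ^ 2 / 2 + ζ * (p - q) ^ 2 / 2, ζ * (p + q) ^ 2 / 2 * (ζ * (p - q) ^ 2 / 2)) := by
  simp only [zapAuto, Prod.mk.injEq]
  constructor <;> ring

lemma zapAuto_mapsTo {ζ : ℂ} (hζ : ‖ζ‖ = 1) :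
    Set.MapsTo (zapAuto ζ) symEllipsoid symEllipsoid := by
  rintro w ⟨z₁, z₂, hlt, rfl⟩
  obtain ⟨p, rfl⟩ := IsAlgClosed.exists_pow_nat_eq z₁ two_pos
  obtain ⟨q, rfl⟩ := IsAlgClosed.exists_pow_nat_eq z₂ two_pos
  refine ⟨_, _, ?_, zapAuto_sq_add_sq ζ p q⟩
  have parallelogram := parallelogram_law_with_norm ℝ p q
  simp only [norm_div, norm_mul, norm_pow, hζ, RCLike.norm_ofNat, one_mul] at hlt ⊢
  linarith

lemma zapAuto_not_linear {ζ : ℂ} (hζ : ζ ≠ 0) :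
    ¬∃ A : ℂ × ℂ →ₗ[ℂ] ℂ × ℂ, ∀ w ∈ symEllipsoid, zapAuto ζ w = A w := by
  rintro ⟨A, hA⟩
  have hdouble : A (1 / 2, 0) = (2 : ℂ) • A (1 / 4, 0) := by rw [← map_smul]; norm_num
  rw [← hA _ (mk_zero_mem_symEllipsoid (by norm_num)),
    ← hA _ (mk_zero_mem_symEllipsoid (by norm_num))] at hdouble
  have hsnd := congrArg Prod.snd hdouble
  simp only [zapAuto, Prod.smul_snd, smul_eq_mul] at hsnd
  exact hζ (pow_eq_zero_iff two_ne_zero |>.mp (by linear_combination 32 * hsnd))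

/-- For each unimodular `ζ`, the map `φ(w₁,w₂) = (ζ w₁, ζ²(w₁²/4 − w₂))` is an
origin-preserving biholomorphic self-map of the symmetrized `(1/2,2)`-ellipsoid which is
not the restriction of any `ℂ`-linear map. -/
theorem zapAuto_is_nonlinear_automorphism (ζ : ℂ) (hζ : ‖ζ‖ = 1) :
    DifferentiableOn ℂ (zapAuto ζ) symEllipsoid ∧
    Set.BijOn (zapAuto ζ) symEllipsoid symEllipsoid ∧
    (∃ g : ℂ × ℂ → ℂ × ℂ, DifferentiableOn ℂ g symEllipsoid ∧
      (∀ w ∈ symEllipsoid, g (zapAuto ζ w) = w) ∧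
      ∀ w ∈ symEllipsoid, zapAuto ζ (g w) = w) ∧
    zapAuto ζ (0, 0) = (0, 0) ∧
    ¬∃ A : ℂ × ℂ →ₗ[ℂ] ℂ × ℂ, ∀ w ∈ symEllipsoid, zapAuto ζ w = A w := by
  have hζ0 : ζ ≠ 0 := norm_ne_zero_iff.mp (by rw [hζ]; exact one_ne_zero)
  have hζinv : ‖ζ⁻¹‖ = 1 := by rw [norm_inv, hζ, inv_one]
  have hinv : Set.InvOn (zapAuto ζ⁻¹) (zapAuto ζ) symEllipsoid symEllipsoid :=
    ⟨fun w _ => zapAuto_leftInverse hζ0 w, fun w _ => zapAuto_rightInverse hζ0 w⟩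
  refine ⟨(zapAuto_differentiable ζ).differentiableOn,
    hinv.bijOn (zapAuto_mapsTo hζ) (zapAuto_mapsTo hζinv),
    ⟨zapAuto ζ⁻¹, (zapAuto_differentiable ζ⁻¹).differentiableOn, hinv.1, hinv.2⟩,
    zapAuto_zero ζ, zapAuto_not_linear hζ0⟩
end
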